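/- arXiv:2008.11918 — 5 statements merged into one kernel-verified Lean document; each statement's English description precedes it below -/
import Mathlib

section
/- For any two probability measures P and Q on the same measurable space, the total variation distance satisfies TV(P,Q) ≤ sqrt(1 - exp(-KL(P‖Q))) ≤ 1 - (1/2)·exp(-KL(P‖Q)). -/
open MeasureTheory ENNReal
open scoped Classical

/-- Total variation distance: `sup_A |P(A) - Q(A)|`. -/
noncomputable def tvDist {Ω : Type*} [MeasurableSpace Ω] (P Q : Measure Ω) : ℝ :=
  sSup {x : ℝ | ∃ A : Set Ω, MeasurableSet A ∧ x = |(P A).toReal - (Q A).toReal|}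

/-- Kullback–Leibler divergence: `∫ log (dP/dQ) dP` if `P ≪ Q` (and the integral is
well-defined), `∞` otherwise. -/
noncomputable def klDiv {Ω : Type*} [MeasurableSpace Ω] (P Q : Measure Ω) : ℝ≥0∞ :=
  if P ≪ Q ∧ Integrable (fun ω => Real.log ((P.rnDeriv Q ω).toReal)) P then
    ENNReal.ofReal (∫ ω, Real.log ((P.rnDeriv Q ω).toReal) ∂P)
  else ⊤

/-- `exp(-x)` for `x : ℝ≥0∞`, with the convention `exp(-∞) = 0`. -/
noncomputable def expNeg (x : ℝ≥0∞) : ℝ :=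
  if x = ⊤ then 0 else Real.exp (-x.toReal)

section Aux

variable {Ω : Type*} [MeasurableSpace Ω]

lemma abs_diff_le_one (P Q : Measure Ω) [IsProbabilityMeasure P] [IsProbabilityMeasure Q]
    (A : Set Ω) : |(P A).toReal - (Q A).toReal| ≤ 1 := by
  have h1 : (P A).toReal ≤ 1 := by
    have := prob_le_one (μ := P) (s := A)
    simpa using ENNReal.toReal_mono one_ne_top this
  have h2 : (Q A).toReal ≤ 1 := by
    have := prob_le_one (μ := Q) (s := A)
    simpa using ENNReal.toReal_mono one_ne_top this
  have h3 : 0 ≤ (P A).toReal := ENNReal.toReal_nonneg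
  have h4 : 0 ≤ (Q A).toReal := ENNReal.toReal_nonneg
  rw [abs_sub_le_iff]; constructor <;> linarith

/-- Bretagnolle–Huber main estimate in the absolutely continuous, integrable case. -/
lemma bh_main (P Q : Measure Ω) [IsProbabilityMeasure P] [IsProbabilityMeasure Q]
    (h1 : P ≪ Q) (hInt : Integrable (fun ω => Real.log ((P.rnDeriv Q ω).toReal)) P) :
    0 ≤ ∫ ω, Real.log ((P.rnDeriv Q ω).toReal) ∂P ∧
      ∀ A : Set Ω, MeasurableSet A →
        |(P A).toReal - (Q A).toReal| ≤
          Real.sqrt (1 - Real.exp (-(∫ ω, Real.log ((P.rnDeriv Q ω).toReal) ∂P))) := by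
  set g : Ω → ℝ := fun ω => (P.rnDeriv Q ω).toReal with hg_def
  set I : ℝ := ∫ ω, Real.log (g ω) ∂P with hI_def
  have hgmeas : Measurable g := (Measure.measurable_rnDeriv P Q).ennreal_toReal
  have hgnn : ∀ x, 0 ≤ g x := fun x => ENNReal.toReal_nonneg
  have hgint : Integrable g Q := Measure.integrable_toReal_rnDeriv
  have hg1 : ∫ x, g x ∂Q = 1 := by
    rw [hg_def, Measure.integral_toReal_rnDeriv h1]; simp
  -- positive and negative parts of g - 1
  set φ : Ω → ℝ := fun x => max (g x - 1) 0 with hφ_def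
  set ψ : Ω → ℝ := fun x => max (1 - g x) 0 with hψ_def
  have hφmeas : Measurable φ := (hgmeas.sub measurable_const).max measurable_const
  have hψmeas : Measurable ψ := (measurable_const.sub hgmeas).max measurable_const
  have hφint : Integrable φ Q := (hgint.sub (integrable_const 1)).pos_part
  have hψint : Integrable ψ Q := ((integrable_const 1).sub hgint).pos_part
  set δ : ℝ := ∫ x, φ x ∂Q with hδ_def
  have hδnn : 0 ≤ δ := integral_nonneg fun x => le_max_right _ _
  have hφψ : ∀ x, φ x - ψ x = g x - 1 := by
    intro x; rcases le_total (g x) 1 with h | h <;> simp [hφ_def, hψ_def, max_eq_left, max_eq_right, sub_nonneg, sub_nonpos, h] <;> ring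
  have hψδ : ∫ x, ψ x ∂Q = δ := by
    have h0 : ∫ x, (φ x - ψ x) ∂Q = 0 := by
      have : ∫ x, (φ x - ψ x) ∂Q = ∫ x, (g x - 1) ∂Q := integral_congr_ae (Filter.Eventually.of_forall hφψ)
      rw [this, integral_sub hgint (integrable_const 1), hg1]
      simp
    rw [integral_sub hφint hψint] at h0
    linarith [h0]
  have hψle1 : ∀ x, ψ x ≤ 1 := by
    intro x; apply max_le _ zero_le_one; linarith [hgnn x]
  have hδ1 : δ ≤ 1 := by
    rw [← hψδ]
    calc ∫ x, ψ x ∂Q ≤ ∫ x, (1:ℝ) ∂Q := integral_mono hψint (integrable_const 1) hψle1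
    _ = 1 := by simp
  -- Step 1: |P A - Q A| ≤ δ
  have step1 : ∀ A : Set Ω, MeasurableSet A → |(P A).toReal - (Q A).toReal| ≤ δ := by
    intro A hA
    have hPA : ∫ x in A, g x ∂Q = (P A).toReal := Measure.setIntegral_toReal_rnDeriv h1 A
    have hQA : ∫ x in A, (1:ℝ) ∂Q = (Q A).toReal := by simp; rfl
    rw [abs_sub_le_iff]
    constructor
    · have : (P A).toReal - (Q A).toReal = ∫ x in A, (g x - 1) ∂Q := by
        rw [integral_sub hgint.integrableOn (integrable_const 1).integrableOn, hPA, hQA]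
      rw [this]
      calc ∫ x in A, (g x - 1) ∂Q ≤ ∫ x in A, φ x ∂Q :=
            integral_mono (hgint.sub (integrable_const 1)).integrableOn hφint.integrableOn
              (fun x => le_max_left _ _)
      _ ≤ δ := setIntegral_le_integral hφint (Filter.Eventually.of_forall fun x => le_max_right _ _)
    · have : (Q A).toReal - (P A).toReal = ∫ x in A, (1 - g x) ∂Q := by
        rw [integral_sub (integrable_const 1).integrableOn hgint.integrableOn, hPA, hQA]
      rw [this, ← hψδ]
      calc ∫ x in A, (1 - g x) ∂Q ≤ ∫ x in A, ψ x ∂Q :=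
            integral_mono ((integrable_const 1).sub hgint).integrableOn hψint.integrableOn
              (fun x => le_max_left _ _)
      _ ≤ ∫ x, ψ x ∂Q := setIntegral_le_integral hψint (Filter.Eventually.of_forall fun x => le_max_right _ _)
  -- min and max functions
  set m : Ω → ℝ := fun x => 1 - ψ x with hm_def
  set M : Ω → ℝ := fun x => 1 + φ x with hM_def
  have hmnn : ∀ x, 0 ≤ m x := fun x => by have := hψle1 x; simp [hm_def]; linarith
  have hMnn : ∀ x, 0 ≤ M x := fun x => by have : 0 ≤ φ x := le_max_right _ _; simp [hM_def]; linarith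
  have hmM : ∀ x, m x * M x = g x := by
    intro x
    show (1 - ψ x) * (1 + φ x) = g x
    rcases le_total (g x) 1 with h | h
    · have e1 : φ x = 0 := max_eq_right (by linarith)
      have e2 : ψ x = 1 - g x := max_eq_left (by linarith)
      rw [e1, e2]; ring
    · have e1 : φ x = g x - 1 := max_eq_left (by linarith)
      have e2 : ψ x = 0 := max_eq_right (by linarith)
      rw [e1, e2]; ring
  have hmint : Integrable m Q := (integrable_const 1).sub hψint
  have hMint : Integrable M Q := (integrable_const 1).add hφint
  have hmI : ∫ x, m x ∂Q = 1 - δ := by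
    rw [hm_def]; simp only []
    rw [integral_sub (integrable_const 1) hψint, hψδ]; simp
  have hMI : ∫ x, M x ∂Q = 1 + δ := by
    rw [hM_def]; simp only []
    rw [integral_add (integrable_const 1) hφint, ← hδ_def]; simp
  -- Step 3: Cauchy-Schwarz
  set H : ℝ := ∫ x, Real.sqrt (g x) ∂Q with hH_def
  have hsqg_int : Integrable (fun x => Real.sqrt (g x)) Q := by
    refine Integrable.mono' (g := fun x => 1 + g x) ((integrable_const 1).add hgint)
      (hgmeas.sqrt.aestronglyMeasurable) (Filter.Eventually.of_forall fun x => ?_)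
    show ‖Real.sqrt (g x)‖ ≤ 1 + g x
    rw [Real.norm_of_nonneg (Real.sqrt_nonneg _)]
    nlinarith [Real.sq_sqrt (hgnn x), Real.sqrt_nonneg (g x), hgnn x]
  have hCS : H ≤ Real.sqrt (1 - δ) * Real.sqrt (1 + δ) := by
    have hpq : Real.HolderConjugate 2 2 := Real.HolderConjugate.two_two
    have h2 : (ENNReal.ofReal (2:ℝ)) = 2 := by norm_num
    have hmemm : MemLp (fun x => Real.sqrt (m x)) (ENNReal.ofReal (2:ℝ)) Q := by
      rw [h2]
      refine (memLp_two_iff_integrable_sq ((measurable_const.sub hψmeas).sqrt.aestronglyMeasurable)).mpr ?_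
      refine (integrable_congr (Filter.Eventually.of_forall fun x => ?_)).mpr hmint
      exact Real.sq_sqrt (hmnn x)
    have hmemM : MemLp (fun x => Real.sqrt (M x)) (ENNReal.ofReal (2:ℝ)) Q := by
      rw [h2]
      refine (memLp_two_iff_integrable_sq ((measurable_const.add hφmeas).sqrt.aestronglyMeasurable)).mpr ?_
      refine (integrable_congr (Filter.Eventually.of_forall fun x => ?_)).mpr hMint
      exact Real.sq_sqrt (hMnn x)
    have key := integral_mul_le_Lp_mul_Lq_of_nonneg hpq
      (Filter.Eventually.of_forall fun x => Real.sqrt_nonneg (m x))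
      (Filter.Eventually.of_forall fun x => Real.sqrt_nonneg (M x)) hmemm hmemM
    have hl : ∫ x, Real.sqrt (m x) * Real.sqrt (M x) ∂Q = H := by
      refine integral_congr_ae (Filter.Eventually.of_forall fun x => ?_)
      show Real.sqrt (m x) * Real.sqrt (M x) = Real.sqrt (g x)
      rw [← hmM x, Real.sqrt_mul (hmnn x)]
    have hrm : ∫ x, Real.sqrt (m x) ^ (2:ℝ) ∂Q = 1 - δ := by
      rw [← hmI]
      refine integral_congr_ae (Filter.Eventually.of_forall fun x => ?_)
      show Real.sqrt (m x) ^ (2:ℝ) = m x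
      rw [Real.rpow_two, Real.sq_sqrt (hmnn x)]
    have hrM : ∫ x, Real.sqrt (M x) ^ (2:ℝ) ∂Q = 1 + δ := by
      rw [← hMI]
      refine integral_congr_ae (Filter.Eventually.of_forall fun x => ?_)
      show Real.sqrt (M x) ^ (2:ℝ) = M x
      rw [Real.rpow_two, Real.sq_sqrt (hMnn x)]
    rw [hl, hrm, hrM] at key
    rw [Real.sqrt_eq_rpow, Real.sqrt_eq_rpow]
    exact key
  -- Step 4: Jensen
  have hgposP : ∀ᵐ x ∂P, 0 < g x := by
    filter_upwards [Measure.rnDeriv_pos h1, h1.ae_le (Measure.rnDeriv_lt_top P Q)] with x hx hx'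
    exact ENNReal.toReal_pos hx.ne' hx'.ne
  have hexp_eq : ∀ᵐ x ∂P, Real.exp (-(1/2) * Real.log (g x)) = g x ^ (-(1/2) : ℝ) := by
    filter_upwards [hgposP] with x hx
    rw [Real.rpow_def_of_pos hx, mul_comm]
  have hsmul : ∀ x, (P.rnDeriv Q x).toReal • (g x ^ (-(1/2) : ℝ)) = Real.sqrt (g x) := by
    intro x
    have hgx : (P.rnDeriv Q x).toReal = g x := rfl
    rw [smul_eq_mul, hgx, Real.sqrt_eq_rpow]
    rcases eq_or_lt_of_le (hgnn x) with h | h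
    · rw [← h, Real.zero_rpow (by norm_num), Real.zero_rpow (by norm_num), mul_zero]
    · have e : g x ^ ((1:ℝ) + (-(1/2))) = g x ^ (1:ℝ) * g x ^ (-(1/2):ℝ) :=
        Real.rpow_add h 1 (-(1/2))
      rw [Real.rpow_one] at e
      rw [← e]
      norm_num
  have hrint : Integrable (fun x => g x ^ (-(1/2) : ℝ)) P := by
    rw [← MeasureTheory.integrable_rnDeriv_smul_iff h1 (f := fun x => g x ^ (-(1/2) : ℝ))]
    exact (integrable_congr (Filter.Eventually.of_forall hsmul)).mpr hsqg_int
  have hchange : ∫ x, g x ^ (-(1/2) : ℝ) ∂P = H := by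
    rw [← MeasureTheory.integral_rnDeriv_smul h1 (f := fun x => g x ^ (-(1/2) : ℝ))]
    exact integral_congr_ae (Filter.Eventually.of_forall fun x => hsmul x)
  have hexpint : Integrable (fun x => Real.exp (-(1/2) * Real.log (g x))) P :=
    (integrable_congr hexp_eq).mpr hrint
  have hjensen : Real.exp (∫ x, -(1/2) * Real.log (g x) ∂P) ≤ H := by
    have := ConvexOn.map_integral_le (μ := P) (s := Set.univ) (f := fun x => -(1/2) * Real.log (g x))
      (g := Real.exp) convexOn_exp Real.continuous_exp.continuousOn isClosed_univ
      (Filter.Eventually.of_forall fun x => Set.mem_univ _)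
      (hInt.const_mul _) (by exact hexpint)
    calc Real.exp (∫ x, -(1/2) * Real.log (g x) ∂P)
        ≤ ∫ x, Real.exp (-(1/2) * Real.log (g x)) ∂P := this
      _ = ∫ x, g x ^ (-(1/2) : ℝ) ∂P := integral_congr_ae hexp_eq
      _ = H := hchange
  have hintI : ∫ x, -(1/2) * Real.log (g x) ∂P = -(1/2) * I := by
    rw [hI_def, integral_const_mul]
  rw [hintI] at hjensen
  -- Step 5: conclusion
  have hHnn : 0 < Real.exp (-(1/2) * I) := Real.exp_pos _
  have hH1 : H ≤ 1 := by
    calc H ≤ Real.sqrt (1 - δ) * Real.sqrt (1 + δ) := hCS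
    _ = Real.sqrt ((1 - δ) * (1 + δ)) := (Real.sqrt_mul (by linarith) _).symm
    _ ≤ Real.sqrt 1 := Real.sqrt_le_sqrt (by nlinarith [sq_nonneg δ])
    _ = 1 := Real.sqrt_one
  have hI0 : 0 ≤ I := by
    have h := hjensen.trans hH1
    have h2 : -(1/2) * I ≤ 0 := Real.exp_le_one_iff.mp h
    linarith
  refine ⟨hI0, fun A hA => ?_⟩
  have hkey : δ ^ 2 ≤ 1 - Real.exp (-I) := by
    have hsq : Real.exp (-I) ≤ (1 - δ) * (1 + δ) := by
      have h2 : Real.exp (-(1/2) * I) ^ 2 ≤ (Real.sqrt (1 - δ) * Real.sqrt (1 + δ)) ^ 2 := by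
        apply pow_le_pow_left₀ hHnn.le (hjensen.trans hCS)
      have h3 : Real.exp (-(1/2) * I) ^ 2 = Real.exp (-I) := by
        rw [← Real.exp_nat_mul]
        congr 1
        push_cast
        ring
      have h4 : (Real.sqrt (1 - δ) * Real.sqrt (1 + δ)) ^ 2 = (1 - δ) * (1 + δ) := by
        rw [mul_pow, Real.sq_sqrt (by linarith), Real.sq_sqrt (by linarith)]
      rw [h3, h4] at h2
      exact h2
    nlinarith
  have hδle : δ ≤ Real.sqrt (1 - Real.exp (-I)) := (Real.le_sqrt hδnn (by nlinarith [Real.exp_pos (-I)])).mpr hkey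
  exact (step1 A hA).trans hδle

end Aux

lemma expNeg_nonneg (x : ℝ≥0∞) : 0 ≤ expNeg x := by
  unfold expNeg
  split
  · exact le_refl 0
  · exact (Real.exp_pos _).le

lemma expNeg_le_one (x : ℝ≥0∞) : expNeg x ≤ 1 := by
  unfold expNeg
  split
  · exact zero_le_one
  · rw [Real.exp_le_one_iff]
    simp [ENNReal.toReal_nonneg]

theorem tv_le_sqrt_one_sub_exp_neg_kl {Ω : Type*} [MeasurableSpace Ω]
    (P Q : Measure Ω) [IsProbabilityMeasure P] [IsProbabilityMeasure Q] :
    tvDist P Q ≤ Real.sqrt (1 - expNeg (klDiv P Q)) ∧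
      Real.sqrt (1 - expNeg (klDiv P Q)) ≤ 1 - (1 / 2) * expNeg (klDiv P Q) := by
  constructor
  · refine Real.sSup_le ?_ (Real.sqrt_nonneg _)
    rintro x ⟨A, hA, rfl⟩
    by_cases hc : P ≪ Q ∧ Integrable (fun ω => Real.log ((P.rnDeriv Q ω).toReal)) P
    · obtain ⟨hI0, hmain⟩ := bh_main P Q hc.1 hc.2
      have hkl : klDiv P Q = ENNReal.ofReal (∫ ω, Real.log ((P.rnDeriv Q ω).toReal) ∂P) := by
        rw [klDiv, if_pos hc]
      have hexp : expNeg (klDiv P Q)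
          = Real.exp (-(∫ ω, Real.log ((P.rnDeriv Q ω).toReal) ∂P)) := by
        rw [hkl, expNeg, if_neg ENNReal.ofReal_ne_top, ENNReal.toReal_ofReal hI0]
      rw [hexp]
      exact hmain A hA
    · have hkl : klDiv P Q = ⊤ := by rw [klDiv, if_neg hc]
      have hexp : expNeg (klDiv P Q) = 0 := by rw [hkl, expNeg, if_pos rfl]
      rw [hexp, sub_zero, Real.sqrt_one]
      exact abs_diff_le_one P Q A
  · set e := expNeg (klDiv P Q) with he
    have h0 : 0 ≤ e := expNeg_nonneg _
    have h1 : e ≤ 1 := expNeg_le_one _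
    calc Real.sqrt (1 - e) ≤ Real.sqrt ((1 - (1/2) * e) ^ 2) :=
          Real.sqrt_le_sqrt (by nlinarith [sq_nonneg e])
    _ = 1 - (1/2) * e := Real.sqrt_sq (by linarith)
end

section
/- Gautschi's inequality: for any real x > 0 and any s ∈ (0,1), x^{1-s} < Γ(x+1)/Γ(x+s) < (x+1)^{1-s}. -/
/-!
Log-convexity of `Γ` between `y` and `y + 1`, combined with `Γ (y + 1) = y Γ y`, gives
`Γ (y + t) ≤ y ^ t Γ y` for `t ∈ (0, 1)`. With `y = x + s`, `t = 1 - s` this bounds `Γ (x + 1)`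
from above by `(x + s) ^ (1 - s) Γ (x + s) < (x + 1) ^ (1 - s) Γ (x + s)`. With `y = x + 1`,
`t = s` it gives `(x + s) Γ (x + s) = Γ (x + 1 + s) ≤ (x + 1) ^ s Γ (x + 1)`, and the strict
weighted AM-GM inequality `x ^ (1 - s) (x + 1) ^ s < x + s` turns this into the strict lower bound.
-/

namespace Real

theorem Gamma_add_le_rpow_mul_Gamma {y t : ℝ} (hy : 0 < y) (ht : t ∈ Set.Ioo (0 : ℝ) 1) :
    Gamma (y + t) ≤ y ^ t * Gamma y := by
  obtain ⟨ht0, ht1⟩ := ht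
  have hΓ : 0 < Gamma y := Gamma_pos_of_pos hy
  calc Gamma (y + t) = Gamma ((1 - t) * y + t * (y + 1)) := by ring_nf
    _ ≤ Gamma y ^ (1 - t) * Gamma (y + 1) ^ t :=
      Gamma_mul_add_mul_le_rpow_Gamma_mul_rpow_Gamma hy (by linarith) (by linarith) ht0
        (by ring)
    _ = y ^ t * (Gamma y ^ (1 - t) * Gamma y ^ t) := by
      rw [Gamma_add_one hy.ne', mul_rpow hy.le hΓ.le]; ring
    _ = y ^ t * Gamma y := by rw [← rpow_add hΓ, sub_add_cancel, rpow_one]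

theorem rpow_mul_rpow_add_one_lt {x s : ℝ} (hx : 0 < x) (hs : s ∈ Set.Ioo (0 : ℝ) 1) :
    x ^ (1 - s) * (x + 1) ^ s < x + s := by
  obtain ⟨hs0, hs1⟩ := hs
  calc x ^ (1 - s) * (x + 1) ^ s < (1 - s) * x + s * (x + 1) :=
      (geom_mean_lt_arith_mean2_weighted_iff_of_pos (by linarith) hs0 hx.le (by linarith)
        (by ring)).2 (by linarith)
    _ = x + s := by ring

end Real

/-- Gautschi's inequality: for `x > 0` and `s ∈ (0,1)`,
`x^(1-s) < Γ(x+1)/Γ(x+s) < (x+1)^(1-s)`. -/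
theorem gautschi_inequality {x s : ℝ} (hx : 0 < x) (hs : s ∈ Set.Ioo (0 : ℝ) 1) :
    x ^ (1 - s) < Real.Gamma (x + 1) / Real.Gamma (x + s) ∧
      Real.Gamma (x + 1) / Real.Gamma (x + s) < (x + 1) ^ (1 - s) := by
  obtain ⟨hs0, hs1⟩ := hs
  have hxs : 0 < x + s := by linarith
  have hΓ : 0 < Real.Gamma (x + s) := Real.Gamma_pos_of_pos hxs
  have upper : Real.Gamma (x + 1) ≤ (x + s) ^ (1 - s) * Real.Gamma (x + s) := by
    have := Real.Gamma_add_le_rpow_mul_Gamma hxs (t := 1 - s) ⟨by linarith, by linarith⟩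
    rwa [add_add_sub_cancel] at this
  have lower : (x + s) * Real.Gamma (x + s) ≤ (x + 1) ^ s * Real.Gamma (x + 1) := by
    rw [← Real.Gamma_add_one hxs.ne', add_right_comm]
    exact Real.Gamma_add_le_rpow_mul_Gamma (by linarith) ⟨hs0, hs1⟩
  constructor
  · rw [lt_div_iff₀ hΓ]
    refine lt_of_mul_lt_mul_left ?_ (Real.rpow_nonneg (by linarith : (0 : ℝ) ≤ x + 1) s)
    calc (x + 1) ^ s * (x ^ (1 - s) * Real.Gamma (x + s))
        = x ^ (1 - s) * (x + 1) ^ s * Real.Gamma (x + s) := by ring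
      _ < (x + s) * Real.Gamma (x + s) :=
        mul_lt_mul_of_pos_right (Real.rpow_mul_rpow_add_one_lt hx ⟨hs0, hs1⟩) hΓ
      _ ≤ (x + 1) ^ s * Real.Gamma (x + 1) := lower
  · rw [div_lt_iff₀ hΓ]
    refine upper.trans_lt (mul_lt_mul_of_pos_right ?_ hΓ)
    exact Real.rpow_lt_rpow hxs.le (by linarith) (by linarith)
end

section
/- The Kullback–Leibler divergence is jointly convex: for probability measures P₁, P₂, Q₁, Q₂ on a common measurable space and any λ ∈ [0,1], KL(λP₁ + (1−λ)P₂ ‖ λQ₁ + (1−λ)Q₂) ≤ λ·KL(P₁‖Q₁) + (1−λ)·KL(P₂‖Q₂). -/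
open MeasureTheory ENNReal
open scoped Classical

/-!
Mathlib's `InformationTheory.klDiv μ ν` carries the correction term `ν(univ) - μ(univ)`, so it
agrees with `klDiv` on measures of equal mass, and it is the f-divergence
`∫⁻ klFun (dμ/dν) dν`. Being positively homogeneous, it is jointly convex as soon as it is
subadditive. For subadditivity put `ν = ν₁ + ν₂`, `gᵢ = dνᵢ/dν` and `fᵢ = dμᵢ/dνᵢ`: then
`g₁ + g₂ = 1` and `d(μ₁ + μ₂)/dν = f₁ g₁ + f₂ g₂` a.e., so convexity of `klFun` with the weights
`gᵢ` bounds `klFun (d(μ₁ + μ₂)/dν)` by `g₁ klFun f₁ + g₂ klFun f₂`, whose `ν`-integral is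
`∫⁻ klFun f₁ dν₁ + ∫⁻ klFun f₂ dν₂`.
-/

namespace InformationTheory

-- `dμᵢ/dνᵢ` may be infinite off the support of `νᵢ`, where `gᵢ = 0`: hence `hf` bounds products.
theorem ofReal_klFun_toReal_add_le {f₁ f₂ g₁ g₂ : ℝ≥0∞} (hf : f₁ * g₁ + f₂ * g₂ ≠ ∞)
    (hg : g₁ + g₂ = 1) :
    ENNReal.ofReal (klFun (f₁ * g₁ + f₂ * g₂).toReal)
      ≤ g₁ * ENNReal.ofReal (klFun f₁.toReal) + g₂ * ENNReal.ofReal (klFun f₂.toReal) := by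
  obtain ⟨hg₁, hg₂⟩ := add_ne_top.1 (hg ▸ one_ne_top)
  obtain ⟨hfg₁, hfg₂⟩ := add_ne_top.1 hf
  have hweights : g₁.toReal + g₂.toReal = 1 := by rw [← toReal_add hg₁ hg₂, hg, toReal_one]
  have hconvex := convexOn_klFun.2 (Set.mem_Ici.2 toReal_nonneg) (Set.mem_Ici.2 toReal_nonneg)
    toReal_nonneg toReal_nonneg hweights (x := f₁.toReal) (y := f₂.toReal)
  simp only [smul_eq_mul] at hconvex
  calc ENNReal.ofReal (klFun (f₁ * g₁ + f₂ * g₂).toReal)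
      = ENNReal.ofReal (klFun (g₁.toReal * f₁.toReal + g₂.toReal * f₂.toReal)) := by
        rw [toReal_add hfg₁ hfg₂, toReal_mul, toReal_mul, mul_comm f₁.toReal, mul_comm f₂.toReal]
    _ ≤ ENNReal.ofReal (g₁.toReal * klFun f₁.toReal + g₂.toReal * klFun f₂.toReal) :=
        ofReal_le_ofReal hconvex
    _ = g₁ * ENNReal.ofReal (klFun f₁.toReal) + g₂ * ENNReal.ofReal (klFun f₂.toReal) := by
        rw [ofReal_add (mul_nonneg toReal_nonneg (klFun_nonneg toReal_nonneg))
            (mul_nonneg toReal_nonneg (klFun_nonneg toReal_nonneg)),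
          ofReal_mul toReal_nonneg, ofReal_mul toReal_nonneg, ofReal_toReal hg₁,
          ofReal_toReal hg₂]

variable {α : Type*} {mα : MeasurableSpace α} {μ₁ μ₂ ν₁ ν₂ : Measure α}
  [IsFiniteMeasure μ₁] [IsFiniteMeasure μ₂] [IsFiniteMeasure ν₁] [IsFiniteMeasure ν₂]

theorem klDiv_add_le : klDiv (μ₁ + μ₂) (ν₁ + ν₂) ≤ klDiv μ₁ ν₁ + klDiv μ₂ ν₂ := by
  by_cases h₁ : μ₁ ≪ ν₁
  swap; · simp [klDiv_of_not_ac h₁]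
  by_cases h₂ : μ₂ ≪ ν₂
  swap; · simp [klDiv_of_not_ac h₂]
  have hν₁ : ν₁ ≪ ν₁ + ν₂ := Measure.AbsolutelyContinuous.rfl.add_right ν₂
  have hν₂ : ν₂ ≪ ν₁ + ν₂ := Measure.AbsolutelyContinuous.rfl.add_right' ν₁
  have hmeas {μ' ν' : Measure α} :
      Measurable fun x ↦ ENNReal.ofReal (klFun (μ'.rnDeriv ν' x).toReal) :=
    (measurable_klFun.comp (Measure.measurable_rnDeriv _ _).ennreal_toReal).ennreal_ofReal
  rw [klDiv_eq_lintegral_klFun_of_ac (h₁.add h₂), klDiv_eq_lintegral_klFun_of_ac h₁,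
    klDiv_eq_lintegral_klFun_of_ac h₂, ← lintegral_rnDeriv_mul hν₁ hmeas.aemeasurable,
    ← lintegral_rnDeriv_mul hν₂ hmeas.aemeasurable]
  refine (lintegral_mono_ae ?_).trans_eq
    (lintegral_add_left ((Measure.measurable_rnDeriv _ _).mul hmeas) _)
  filter_upwards [Measure.rnDeriv_add' μ₁ μ₂ (ν₁ + ν₂), Measure.rnDeriv_add' ν₁ ν₂ (ν₁ + ν₂),
    Measure.rnDeriv_self (ν₁ + ν₂), Measure.rnDeriv_mul_rnDeriv h₁ (κ := ν₁ + ν₂),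
    Measure.rnDeriv_mul_rnDeriv h₂ (κ := ν₁ + ν₂), Measure.rnDeriv_lt_top (μ₁ + μ₂) (ν₁ + ν₂)]
    with x hμ hν hνν hchain₁ hchain₂ hfinite
  simp only [Pi.add_apply, Pi.mul_apply] at hμ hν hchain₁ hchain₂
  rw [hμ, ← hchain₁, ← hchain₂] at hfinite ⊢
  exact ofReal_klFun_toReal_add_le hfinite.ne (by rw [← hν, hνν])

theorem klDiv_smul_add_smul_le (a b : NNReal) :
    klDiv (a • μ₁ + b • μ₂) (a • ν₁ + b • ν₂) ≤ a * klDiv μ₁ ν₁ + b * klDiv μ₂ ν₂ := by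
  rw [← klDiv_smul_same, ← klDiv_smul_same]
  exact klDiv_add_le

end InformationTheory

theorem klDiv_eq_informationTheory_klDiv {Ω : Type*} [MeasurableSpace Ω]
    {μ ν : Measure Ω} (h : μ Set.univ = ν Set.univ) : klDiv μ ν = InformationTheory.klDiv μ ν := by
  rw [InformationTheory.klDiv_def, measureReal_def, measureReal_def, h, add_sub_cancel_right]
  rfl

theorem klDiv_jointly_convex_general {Ω : Type*} [MeasurableSpace Ω]
    (P₁ P₂ Q₁ Q₂ : Measure Ω) [IsProbabilityMeasure P₁] [IsProbabilityMeasure P₂]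
    [IsProbabilityMeasure Q₁] [IsProbabilityMeasure Q₂]
    {l : ℝ} :
    klDiv (ENNReal.ofReal l • P₁ + ENNReal.ofReal (1 - l) • P₂)
        (ENNReal.ofReal l • Q₁ + ENNReal.ofReal (1 - l) • Q₂)
      ≤ ENNReal.ofReal l * klDiv P₁ Q₁ + ENNReal.ofReal (1 - l) * klDiv P₂ Q₂ := by
  rw [klDiv_eq_informationTheory_klDiv (by simp), klDiv_eq_informationTheory_klDiv (by simp),
    klDiv_eq_informationTheory_klDiv (by simp)]
  exact InformationTheory.klDiv_smul_add_smul_le l.toNNReal (1 - l).toNNReal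

/-- Joint convexity of the Kullback–Leibler divergence. -/
theorem klDiv_jointly_convex {Ω : Type*} [MeasurableSpace Ω]
    (P₁ P₂ Q₁ Q₂ : Measure Ω) [IsProbabilityMeasure P₁] [IsProbabilityMeasure P₂]
    [IsProbabilityMeasure Q₁] [IsProbabilityMeasure Q₂]
    {l : ℝ} (hl : l ∈ Set.Icc (0 : ℝ) 1) :
    klDiv (ENNReal.ofReal l • P₁ + ENNReal.ofReal (1 - l) • P₂)
        (ENNReal.ofReal l • Q₁ + ENNReal.ofReal (1 - l) • Q₂)
      ≤ ENNReal.ofReal l * klDiv P₁ Q₁ + ENNReal.ofReal (1 - l) * klDiv P₂ Q₂ :=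
  klDiv_jointly_convex_general P₁ P₂ Q₁ Q₂
end

section
/- Let A be a symmetric positive semidefinite d×d matrix, let s₀ ≤ d, and suppose there is an integer r with s₀ ≤ r and s₀ + r ≤ d such that κ := sqrt(φ_min(s₀+r, A))·(1 − 3·sqrt(s₀·φ_max(r, A)/(r·φ_min(s₀+r, A)))) > 0. Then for every S ⊂ [d] with |S| ≤ s₀ and every nonzero v ∈ R^d with ‖v(Sᶜ)‖₁ ≤ 3‖v(S)‖₁, one has vᵀAv ≥ κ²·‖v(S̃)‖₂², where S̃ is the union of S with the indices of the r largest-in-absolute-value coordinates of v outside S. -/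
/-!
Split `v = u + w`, with `u = v(S̃)` and `w` the coordinates outside `S̃`. As `A` is positive
semidefinite, `p x = √(xᵀAx)` is a seminorm, so `p v ≥ p u - p w`, and `p u ≥ √φ_min ‖u‖₂` because
`u` is `(s₀ + r)`-sparse. Cutting the coordinates outside `S` into consecutive blocks of `r` in
decreasing modulus (the first block being `T`), each later block has `ℓ²` norm at most `1/√r`
times the `ℓ¹` norm of the block before it; with `φ_max` on each `r`-sparse block this gives
`p w ≤ √φ_max ‖v(Sᶜ)‖₁ / √r ≤ 3 √φ_max ‖v(S)‖₁ / √r ≤ 3 √(s₀ φ_max / r) ‖u‖₂`.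
-/

open Finset Matrix

/-- Restricted minimal eigenvalue `φ_min(s, A)`. -/
noncomputable def phiMin {d : ℕ} (s : ℕ) (A : Matrix (Fin d) (Fin d) ℝ) : ℝ :=
  sInf {x : ℝ | ∃ v : Fin d → ℝ, v ≠ 0 ∧
    (Finset.univ.filter fun i => v i ≠ 0).card ≤ s ∧
    x = (v ⬝ᵥ A.mulVec v) / (∑ i, v i ^ 2)}

/-- Restricted maximal eigenvalue `φ_max(s, A)`. -/
noncomputable def phiMax {d : ℕ} (s : ℕ) (A : Matrix (Fin d) (Fin d) ℝ) : ℝ :=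
  sSup {x : ℝ | ∃ v : Fin d → ℝ, v ≠ 0 ∧
    (Finset.univ.filter fun i => v i ≠ 0).card ≤ s ∧
    x = (v ⬝ᵥ A.mulVec v) / (∑ i, v i ^ 2)}

theorem Finset.exists_subset_card_eq_forall_sdiff_le {α β : Type*} [DecidableEq α]
    [LinearOrder β] (f : α → β) (U : Finset α) {k : ℕ} (hk : k ≤ #U) :
    ∃ C ⊆ U, #C = k ∧ ∀ i ∈ C, ∀ j ∈ U \ C, f j ≤ f i := by
  induction k with
  | zero => exact ⟨∅, empty_subset U, card_empty, by simp⟩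
  | succ k ih =>
    obtain ⟨C, hCU, hC, hCtop⟩ := ih (by omega)
    have hne : (U \ C).Nonempty := by
      rw [← card_pos, card_sdiff_of_subset hCU]; omega
    obtain ⟨a, ha, hamax⟩ := exists_max_image (U \ C) f hne
    have haC : a ∉ C := (mem_sdiff.1 ha).2
    refine ⟨insert a C, insert_subset (mem_sdiff.1 ha).1 hCU,
      by rw [card_insert_of_notMem haC, hC], ?_⟩
    intro i hi j hj
    rw [sdiff_insert] at hj
    rcases mem_insert.1 hi with rfl | hi
    · exact hamax j (mem_of_mem_erase hj)
    · exact hCtop i hi j (mem_of_mem_erase hj)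

theorem Finset.sum_abs_le_sqrt_card_mul_sqrt_sum_sq {α : Type*} (s : Finset α) (f : α → ℝ) :
    ∑ i ∈ s, |f i| ≤ √(#s : ℝ) * √(∑ i ∈ s, f i ^ 2) := by
  rw [← Real.sqrt_mul (Nat.cast_nonneg _)]
  refine (le_abs_self _).trans (Real.abs_le_sqrt ?_)
  simpa only [sq_abs] using sq_sum_le_card_mul_sum_sq (s := s) (f := fun i => |f i|)

theorem sqrt_card_mul_sqrt_sum_sq_le_sum_abs {α : Type*} {v : α → ℝ} {T U : Finset α}
    (hUT : #U ≤ #T) (h : ∀ i ∈ T, ∀ j ∈ U, |v j| ≤ |v i|) :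
    √(#T : ℝ) * √(∑ j ∈ U, v j ^ 2) ≤ ∑ i ∈ T, |v i| := by
  set s := ∑ i ∈ T, |v i|
  have hs : 0 ≤ s := sum_nonneg fun i _ => abs_nonneg _
  rcases (Nat.cast_nonneg (α := ℝ) #T).eq_or_lt with hT | hT
  · rw [← hT, Real.sqrt_zero, zero_mul]; exact hs
  -- each `|v j|` with `j ∈ U` is at most the average of `|v|` over `T`
  have hterm : ∀ j ∈ U, (#T : ℝ) ^ 2 * v j ^ 2 ≤ s ^ 2 := fun j hj => by
    have : #T • |v j| ≤ s := card_nsmul_le_sum T _ _ fun i hi => h i hi j hj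
    rw [nsmul_eq_mul] at this
    simpa only [mul_pow, sq_abs] using pow_le_pow_left₀ (by positivity) this 2
  have hsum : (#T : ℝ) ^ 2 * ∑ j ∈ U, v j ^ 2 ≤ #T * s ^ 2 := by
    calc (#T : ℝ) ^ 2 * ∑ j ∈ U, v j ^ 2 ≤ ∑ _j ∈ U, s ^ 2 := by
          rw [mul_sum]; exact sum_le_sum hterm
      _ = #U * s ^ 2 := by rw [sum_const, nsmul_eq_mul]
      _ ≤ #T * s ^ 2 := by gcongr
  rw [← Real.sqrt_mul hT.le, ← Real.sqrt_sq hs]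
  exact Real.sqrt_le_sqrt (by nlinarith)

section SortedBlocks

variable {ι : Type*} [Fintype ι]

theorem card_indicator_ne_zero_le (v : ι → ℝ) (U : Finset ι) :
    #{i | (U : Set ι).indicator v i ≠ 0} ≤ #U :=
  card_le_card fun _ hi => mem_coe.1 (Set.mem_of_indicator_ne_zero (mem_filter.1 hi).2)

theorem sum_indicator_sq (v : ι → ℝ) (U : Finset ι) :
    ∑ i, (U : Set ι).indicator v i ^ 2 = ∑ i ∈ U, v i ^ 2 := by
  classical
  simp [Set.indicator_apply, ite_pow, sum_ite_mem]

variable {r : ℕ} {c : ℝ}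

theorem sqrt_mul_apply_indicator_le {q : (ι → ℝ) → ℝ}
    (hq : ∀ x : ι → ℝ, #{i | x i ≠ 0} ≤ r → q x ≤ c * √(∑ i, x i ^ 2)) (hc : 0 ≤ c)
    {v : ι → ℝ} {T U : Finset ι} (hU : #U ≤ r) (hT : #T = r)
    (h : ∀ i ∈ T, ∀ j ∈ U, |v j| ≤ |v i|) :
    √(r : ℝ) * q ((U : Set ι).indicator v) ≤ c * ∑ i ∈ T, |v i| := by
  have hsparse := hq _ ((card_indicator_ne_zero_le v U).trans hU)
  rw [sum_indicator_sq] at hsparse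
  subst hT
  calc √(#T : ℝ) * q ((U : Set ι).indicator v)
      ≤ √(#T : ℝ) * (c * √(∑ j ∈ U, v j ^ 2)) := by gcongr
    _ = c * (√(#T : ℝ) * √(∑ j ∈ U, v j ^ 2)) := by ring
    _ ≤ c * ∑ i ∈ T, |v i| := by gcongr; exact sqrt_card_mul_sqrt_sum_sq_le_sum_abs hU h

variable [DecidableEq ι] (p : Seminorm ℝ (ι → ℝ))

theorem Seminorm.sqrt_mul_indicator_sdiff_le_sum_abs
    (hp : ∀ x : ι → ℝ, #{i | x i ≠ 0} ≤ r → p x ≤ c * √(∑ i, x i ^ 2)) (hc : 0 ≤ c)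
    (v : ι → ℝ) (V : Finset ι) : ∀ T ⊆ V, #T = r → (∀ i ∈ T, ∀ j ∈ V \ T, |v j| ≤ |v i|) →
      √(r : ℝ) * p ((↑(V \ T) : Set ι).indicator v) ≤ c * ∑ j ∈ V, |v j| := by
  induction V using Finset.strongInduction with
  | H V ih =>
  intro T hTV hT hTtop
  rcases r.eq_zero_or_pos with rfl | hr
  · simpa using mul_nonneg hc (sum_nonneg fun j _ => abs_nonneg (v j))
  set W := V \ T
  have hsplit : ∑ j ∈ V, |v j| = ∑ j ∈ T, |v j| + ∑ j ∈ W, |v j| := by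
    rw [add_comm, sum_sdiff hTV]
  by_cases hsmall : #W ≤ r
  · have := sqrt_mul_apply_indicator_le hp hc hsmall hT hTtop
    have hrest : 0 ≤ ∑ j ∈ W, |v j| := sum_nonneg fun j _ => abs_nonneg _
    nlinarith
  obtain ⟨C, hCW, hC, hCtop⟩ :=
    exists_subset_card_eq_forall_sdiff_le (fun j => |v j|) W (k := r) (by omega)
  have hWV : W ⊂ V := sdiff_ssubset hTV (card_pos.1 (by omega))
  have hhead := sqrt_mul_apply_indicator_le hp hc hC.le hT
    fun i hi j hj => hTtop i hi j (hCW hj)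
  have htail := ih W hWV C hCW hC hCtop
  have hdecomp : (W : Set ι).indicator v =
      (C : Set ι).indicator v + (↑(W \ C) : Set ι).indicator v := by
    have := Set.indicator_union_of_disjoint (disjoint_coe.2 (disjoint_sdiff (s := C) (t := W))) v
    rwa [← coe_union, union_sdiff_of_subset hCW] at this
  calc √(r : ℝ) * p ((W : Set ι).indicator v)
      ≤ √(r : ℝ) * p ((C : Set ι).indicator v)
        + √(r : ℝ) * p ((↑(W \ C) : Set ι).indicator v) := by
        rw [← mul_add, hdecomp]; gcongr; exact map_add_le_add p _ _
    _ ≤ c * ∑ j ∈ T, |v j| + c * ∑ j ∈ W, |v j| := add_le_add hhead htail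
    _ = c * ∑ j ∈ V, |v j| := by rw [hsplit, mul_add]

theorem Seminorm.mul_sqrt_sum_sq_union_le_of_cone {a k : ℝ} {s₀ : ℕ} (hr : 0 < r) (hk : 0 ≤ k)
    (hlow : ∀ x : ι → ℝ, #{i | x i ≠ 0} ≤ s₀ + r → a * √(∑ i, x i ^ 2) ≤ p x)
    (hup : ∀ x : ι → ℝ, #{i | x i ≠ 0} ≤ r → p x ≤ c * √(∑ i, x i ^ 2)) (hc : 0 ≤ c)
    {S T : Finset ι} {v : ι → ℝ} (hS : #S ≤ s₀) (hcone : ∑ i ∈ Sᶜ, |v i| ≤ k * ∑ i ∈ S, |v i|)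
    (hST : Disjoint S T) (hT : #T = r) (hTtop : ∀ i ∈ T, ∀ j, j ∉ S → j ∉ T → |v j| ≤ |v i|) :
    (a - k * √(s₀ : ℝ) * c / √r) * √(∑ i ∈ S ∪ T, v i ^ 2) ≤ p v := by
  set N := √(∑ i ∈ S ∪ T, v i ^ 2) with hN
  set u := (↑(S ∪ T) : Set ι).indicator v with hu
  set w := (↑(Sᶜ \ T) : Set ι).indicator v with hw
  have huw : u + w = v := by
    have hcompl : (↑(Sᶜ \ T) : Set ι) = (↑(S ∪ T))ᶜ := by ext i; simp
    rw [hu, hw, hcompl, Set.indicator_self_add_compl]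
  have hhead : a * N ≤ p u := by
    rw [hN, hu, ← sum_indicator_sq]
    refine hlow _ ((card_indicator_ne_zero_le v _).trans ?_)
    exact (card_union_le S T).trans (by omega)
  have hS1 : ∑ i ∈ S, |v i| ≤ √(s₀ : ℝ) * N := by
    refine (sum_abs_le_sqrt_card_mul_sqrt_sum_sq S v).trans ?_
    rw [hN]
    gcongr
    exact subset_union_left
  have htail : p w ≤ k * √(s₀ : ℝ) * c / √r * N := by
    rw [div_mul_eq_mul_div, le_div_iff₀ (by positivity), mul_comm]
    calc √(r : ℝ) * p w ≤ c * ∑ i ∈ Sᶜ, |v i| :=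
          p.sqrt_mul_indicator_sdiff_le_sum_abs hup hc v Sᶜ T
            (fun i hi => mem_compl.2 (disjoint_right.1 hST hi)) hT
            (fun i hi j hj => hTtop i hi j (mem_compl.1 (mem_sdiff.1 hj).1) (mem_sdiff.1 hj).2)
      _ ≤ c * (k * (√(s₀ : ℝ) * N)) := by gcongr; exact hcone.trans (by gcongr)
      _ = _ := by ring
  have hsub : p u ≤ p v + p w := by
    have := map_sub_le_add p (u + w) w
    rwa [add_sub_cancel_right, huw] at this
  rw [sub_mul]
  linarith

end SortedBlocks

theorem Matrix.PosSemidef.exists_seminorm_eq_sqrt_dotProduct_mulVec {n : Type*} [Fintype n]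
    [DecidableEq n] {A : Matrix n n ℝ} (hA : A.PosSemidef) :
    ∃ p : Seminorm ℝ (n → ℝ), ∀ x, p x = √(x ⬝ᵥ A *ᵥ x) := by
  open scoped MatrixOrder in
  obtain ⟨B, rfl⟩ := CStarAlgebra.nonneg_iff_eq_star_mul_self.mp hA.nonneg
  refine ⟨(normSeminorm ℝ (EuclideanSpace ℝ n)).comp
    ((WithLp.linearEquiv 2 ℝ (n → ℝ)).symm.toLinearMap ∘ₗ B.mulVecLin), fun x => ?_⟩
  rw [Seminorm.comp_apply, coe_normSeminorm, EuclideanSpace.norm_eq, star_eq_conjTranspose,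
    conjTranspose_eq_transpose_of_trivial, ← mulVec_mulVec, dotProduct_mulVec, vecMul_transpose]
  simp [dotProduct, sq]

theorem dotProduct_mulVec_le_sum_abs_mul_sum_sq {n : Type*} [Fintype n]
    (A : Matrix n n ℝ) (v : n → ℝ) :
    v ⬝ᵥ A *ᵥ v ≤ (∑ i, ∑ j, |A i j|) * ∑ i, v i ^ 2 := by
  have hv : ∀ i, |v i| ≤ √(∑ k, v k ^ 2) := fun i =>
    Real.abs_le_sqrt (single_le_sum (fun k _ => sq_nonneg (v k)) (mem_univ i))
  have hterm : ∀ i j, v i * (A i j * v j) ≤ |A i j| * ∑ k, v k ^ 2 := fun i j => by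
    rw [← Real.sq_sqrt (sum_nonneg fun k _ => sq_nonneg (v k))]
    calc v i * (A i j * v j) ≤ |v i * (A i j * v j)| := le_abs_self _
      _ = |A i j| * (|v i| * |v j|) := by rw [abs_mul, abs_mul]; ring
      _ ≤ |A i j| * (√(∑ k, v k ^ 2) * √(∑ k, v k ^ 2)) := by gcongr <;> exact hv _
      _ = _ := by ring
  calc v ⬝ᵥ A *ᵥ v = ∑ i, ∑ j, v i * (A i j * v j) := by simp [dotProduct, mulVec, mul_sum]
    _ ≤ ∑ i, ∑ j, |A i j| * ∑ k, v k ^ 2 := sum_le_sum fun i _ => sum_le_sum fun j _ => hterm i j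
    _ = _ := by simp_rw [sum_mul]

theorem sum_sq_pos {n : Type*} [Fintype n] {v : n → ℝ} (hv : v ≠ 0) : 0 < ∑ i, v i ^ 2 := by
  obtain ⟨i, hi⟩ := Function.ne_iff.1 hv
  exact sum_pos' (fun j _ => sq_nonneg (v j)) ⟨i, mem_univ i, pow_two_pos_of_ne_zero hi⟩

section RestrictedEigenvalues

variable {d s : ℕ} {A : Matrix (Fin d) (Fin d) ℝ} {v : Fin d → ℝ}

theorem phiMin_zero (A : Matrix (Fin d) (Fin d) ℝ) : phiMin 0 A = 0 := by
  rw [phiMin]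
  convert Real.sInf_empty
  refine Set.eq_empty_of_forall_notMem ?_
  rintro x ⟨v, hv, hcard, -⟩
  refine hv (funext fun i => of_not_not fun hi => ?_)
  rw [Nat.le_zero, card_eq_zero, filter_eq_empty_iff] at hcard
  exact hcard (mem_univ i) hi

theorem phiMin_mul_le (hA : A.PosSemidef) (hv : #{i | v i ≠ 0} ≤ s) :
    phiMin s A * ∑ i, v i ^ 2 ≤ v ⬝ᵥ A *ᵥ v := by
  rcases eq_or_ne v 0 with rfl | hv0
  · simp
  rw [← le_div_iff₀ (sum_sq_pos hv0)]
  refine csInf_le ⟨0, ?_⟩ ⟨v, hv0, hv, rfl⟩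
  rintro x ⟨w, -, -, rfl⟩
  exact div_nonneg (by simpa using hA.dotProduct_mulVec_nonneg w) (sum_nonneg fun i _ => sq_nonneg _)

theorem dotProduct_mulVec_le_phiMax_mul (A : Matrix (Fin d) (Fin d) ℝ)
    (hv : #{i | v i ≠ 0} ≤ s) : v ⬝ᵥ A *ᵥ v ≤ phiMax s A * ∑ i, v i ^ 2 := by
  rcases eq_or_ne v 0 with rfl | hv0
  · simp
  rw [← div_le_iff₀ (sum_sq_pos hv0)]
  refine le_csSup ⟨∑ i, ∑ j, |A i j|, ?_⟩ ⟨v, hv0, hv, rfl⟩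
  rintro x ⟨w, hw, -, rfl⟩
  exact div_le_of_le_mul₀ (sum_nonneg fun i _ => sq_nonneg _) (by positivity)
    (dotProduct_mulVec_le_sum_abs_mul_sum_sq A w)

end RestrictedEigenvalues

theorem sqrt_mul_one_sub_mul_sqrt_div {P M s r : ℝ} (k : ℝ) (hP : 0 < P) (hs : 0 ≤ s)
    (hr : 0 < r) : √P * (1 - k * √(s * M / (r * P))) = √P - k * √s * √M / √r := by
  rw [Real.sqrt_div' _ (by positivity), Real.sqrt_mul hs, Real.sqrt_mul hr.le]
  field_simp

theorem restricted_eigenvalue_recovery_general {d s₀ r : ℕ}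
    (A : Matrix (Fin d) (Fin d) ℝ) (hA : A.PosSemidef)
    (hs₀r : s₀ ≤ r)
    (hκ : 0 < Real.sqrt (phiMin (s₀ + r) A) *
      (1 - 3 * Real.sqrt (s₀ * phiMax r A / (r * phiMin (s₀ + r) A)))) :
    ∀ S : Finset (Fin d), S.card ≤ s₀ →
    ∀ v : Fin d → ℝ, v ≠ 0 → (∑ i ∈ Sᶜ, |v i|) ≤ 3 * ∑ i ∈ S, |v i| →
    ∀ T : Finset (Fin d), Disjoint S T → T.card = r →
      (∀ i ∈ T, ∀ j, j ∉ S → j ∉ T → |v j| ≤ |v i|) →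
      (Real.sqrt (phiMin (s₀ + r) A) *
          (1 - 3 * Real.sqrt (s₀ * phiMax r A / (r * phiMin (s₀ + r) A)))) ^ 2 *
          (∑ i ∈ S ∪ T, v i ^ 2)
        ≤ v ⬝ᵥ A.mulVec v := by
  intro S hS v _ hcone T hST hT hTtop
  obtain ⟨p, hp⟩ := hA.exists_seminorm_eq_sqrt_dotProduct_mulVec
  have hP : 0 < phiMin (s₀ + r) A :=
    Real.sqrt_pos.1 <| (Real.sqrt_nonneg _).lt_of_ne' (left_ne_zero_of_mul hκ.ne')
  have hr : 0 < r := Nat.pos_of_ne_zero fun hr => hP.ne' <| by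
    rw [show s₀ + r = 0 by omega, phiMin_zero]
  have hbound := p.mul_sqrt_sum_sq_union_le_of_cone hr zero_le_three
    (fun x hx => by
      rw [hp, ← Real.sqrt_mul hP.le]; exact Real.sqrt_le_sqrt (phiMin_mul_le hA hx))
    (fun x hx => by
      rw [hp, ← Real.sqrt_mul' _ (sum_nonneg fun i _ => sq_nonneg _)]
      exact Real.sqrt_le_sqrt (dotProduct_mulVec_le_phiMax_mul A hx))
    (Real.sqrt_nonneg _) hS hcone hST hT hTtop
  rw [← sqrt_mul_one_sub_mul_sqrt_div 3 hP (Nat.cast_nonneg _) (Nat.cast_pos.2 hr)] at hbound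
  calc _ = (_ * √(∑ i ∈ S ∪ T, v i ^ 2)) ^ 2 := by
        rw [mul_pow _ (√_), Real.sq_sqrt (sum_nonneg fun i _ => sq_nonneg _)]
    _ ≤ p v ^ 2 := pow_le_pow_left₀ (mul_nonneg hκ.le (Real.sqrt_nonneg _)) hbound 2
    _ = v ⬝ᵥ A *ᵥ v := by rw [hp, Real.sq_sqrt (by simpa using hA.dotProduct_mulVec_nonneg v)]

/-- Bickel–Ritov–Tsybakov: a restricted eigenvalue condition implies that on the cone
`‖v(Sᶜ)‖₁ ≤ 3‖v(S)‖₁`, one has `vᵀAv ≥ κ²·‖v(S̃)‖₂²`, where `S̃` adjoins to `S` the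
`r` largest-in-absolute-value coordinates of `v` outside `S`. -/
theorem restricted_eigenvalue_recovery {d s₀ r : ℕ}
    (A : Matrix (Fin d) (Fin d) ℝ) (hA : A.PosSemidef)
    (hs₀r : s₀ ≤ r) (hsrd : s₀ + r ≤ d)
    (hκ : 0 < Real.sqrt (phiMin (s₀ + r) A) *
      (1 - 3 * Real.sqrt (s₀ * phiMax r A / (r * phiMin (s₀ + r) A)))) :
    ∀ S : Finset (Fin d), S.card ≤ s₀ →
    ∀ v : Fin d → ℝ, v ≠ 0 → (∑ i ∈ Sᶜ, |v i|) ≤ 3 * ∑ i ∈ S, |v i| →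
    ∀ T : Finset (Fin d), Disjoint S T → T.card = r →
      (∀ i ∈ T, ∀ j, j ∉ S → j ∉ T → |v j| ≤ |v i|) →
      (Real.sqrt (phiMin (s₀ + r) A) *
          (1 - 3 * Real.sqrt (s₀ * phiMax r A / (r * phiMin (s₀ + r) A)))) ^ 2 *
          (∑ i ∈ S ∪ T, v i ^ 2)
        ≤ v ⬝ᵥ A.mulVec v :=
  restricted_eigenvalue_recovery_general A hA hs₀r hκ
end

section
/- Let v ∈ R^d with ‖v(S₀ᶜ)‖₁ ≤ 3‖v(S₀)‖₁ for some index set S₀ with |S₀| ≤ s₀, and let S̃₀ be the union of S₀ with the indices of the r largest-in-absolute-value coordinates of v outside S₀. Then ‖v(S̃₀ᶜ)‖₂² ≤ (9s₀/r)·‖v(S̃₀)‖₂², and hence ‖v‖₂ ≤ (1 + 3·sqrt(s₀/r))·‖v(S̃₀)‖₂. -/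
open Finset

/-- If `‖v(S₀ᶜ)‖₁ ≤ 3‖v(S₀)‖₁` with `|S₀| ≤ s₀`, and `S̃₀ = S₀ ∪ T` where `T` consists of
the `r` largest-in-absolute-value coordinates of `v` outside `S₀`, then
`‖v(S̃₀ᶜ)‖₂² ≤ (9s₀/r)·‖v(S̃₀)‖₂²` and `‖v‖₂ ≤ (1 + 3√(s₀/r))·‖v(S̃₀)‖₂`. -/
theorem cone_tail_bound {d s₀ r : ℕ} (hr : 1 ≤ r)
    (v : Fin d → ℝ) (S₀ : Finset (Fin d)) (hS₀ : S₀.card ≤ s₀)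
    (hcone : (∑ i ∈ S₀ᶜ, |v i|) ≤ 3 * ∑ i ∈ S₀, |v i|)
    (T : Finset (Fin d)) (hdisj : Disjoint S₀ T) (hT : T.card = r)
    (hlargest : ∀ i ∈ T, ∀ j, j ∉ S₀ → j ∉ T → |v j| ≤ |v i|) :
    (∑ i ∈ (S₀ ∪ T)ᶜ, v i ^ 2) ≤ (9 * s₀ / r : ℝ) * ∑ i ∈ S₀ ∪ T, v i ^ 2 ∧
      Real.sqrt (∑ i, v i ^ 2)
        ≤ (1 + 3 * Real.sqrt (s₀ / r)) * Real.sqrt (∑ i ∈ S₀ ∪ T, v i ^ 2) := by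
  have hr' : (0:ℝ) < r := by exact_mod_cast hr
  set A : ℝ := ∑ i ∈ S₀, |v i| with hA
  have hA0 : 0 ≤ A := Finset.sum_nonneg fun i _ => abs_nonneg _
  have hTsub : T ⊆ S₀ᶜ := fun i hi =>
    Finset.mem_compl.mpr fun h => Finset.disjoint_left.mp hdisj h hi
  have hTle : (∑ i ∈ T, |v i|) ≤ 3 * A :=
    le_trans (Finset.sum_le_sum_of_subset_of_nonneg hTsub (fun i _ _ => abs_nonneg _)) hcone
  have hkey : ∀ j ∈ (S₀ ∪ T)ᶜ, |v j| ≤ 3 * A / r := by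
    intro j hj
    simp only [Finset.mem_compl, Finset.mem_union, not_or] at hj
    have h1 : (r : ℝ) * |v j| ≤ ∑ i ∈ T, |v i| := by
      calc (r:ℝ) * |v j| = ∑ _i ∈ T, |v j| := by rw [Finset.sum_const, hT]; ring
        _ ≤ ∑ i ∈ T, |v i| := Finset.sum_le_sum fun i hi => hlargest i hi j hj.1 hj.2
    rw [le_div_iff₀ hr']
    linarith
  have hsubC : (S₀ ∪ T)ᶜ ⊆ S₀ᶜ := Finset.compl_subset_compl.mpr Finset.subset_union_left
  have htail1 : (∑ i ∈ (S₀ ∪ T)ᶜ, |v i|) ≤ 3 * A :=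
    le_trans (Finset.sum_le_sum_of_subset_of_nonneg hsubC fun i _ _ => abs_nonneg _) hcone
  have htail2 : (∑ i ∈ (S₀ ∪ T)ᶜ, v i ^ 2) ≤ (3 * A / r) * (3 * A) := by
    calc (∑ i ∈ (S₀ ∪ T)ᶜ, v i ^ 2) = ∑ i ∈ (S₀ ∪ T)ᶜ, |v i| * |v i| := by
          refine Finset.sum_congr rfl fun i _ => ?_
          rw [abs_mul_abs_self]; ring
      _ ≤ ∑ i ∈ (S₀ ∪ T)ᶜ, (3 * A / r) * |v i| :=
          Finset.sum_le_sum fun i hi => mul_le_mul_of_nonneg_right (hkey i hi) (abs_nonneg _)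
      _ = (3 * A / r) * ∑ i ∈ (S₀ ∪ T)ᶜ, |v i| := by rw [← Finset.mul_sum]
      _ ≤ (3 * A / r) * (3 * A) := by
          apply mul_le_mul_of_nonneg_left htail1; positivity
  set Q : ℝ := ∑ i ∈ S₀ ∪ T, v i ^ 2 with hQ
  have hQ0 : 0 ≤ Q := Finset.sum_nonneg fun i _ => sq_nonneg _
  have hCS : A ^ 2 ≤ (s₀ : ℝ) * Q := by
    have h1 : A ^ 2 ≤ (S₀.card : ℝ) * ∑ i ∈ S₀, v i ^ 2 := by
      have := sq_sum_le_card_mul_sum_sq (s := S₀) (f := fun i => |v i|)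
      simpa [sq_abs] using this
    have h2 : (∑ i ∈ S₀, v i ^ 2) ≤ Q :=
      Finset.sum_le_sum_of_subset_of_nonneg Finset.subset_union_left
        fun i _ _ => sq_nonneg _
    have h3 : (S₀.card : ℝ) ≤ (s₀ : ℝ) := by exact_mod_cast hS₀
    calc A ^ 2 ≤ (S₀.card : ℝ) * ∑ i ∈ S₀, v i ^ 2 := h1
      _ ≤ (s₀ : ℝ) * Q := by
          apply mul_le_mul h3 h2 (Finset.sum_nonneg fun i _ => sq_nonneg _)
          positivity
  have hfirst : (∑ i ∈ (S₀ ∪ T)ᶜ, v i ^ 2) ≤ (9 * s₀ / r : ℝ) * Q := by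
    have : (3 * A / r) * (3 * A) = 9 * A ^ 2 / r := by ring
    rw [this] at htail2
    refine htail2.trans ?_
    rw [div_mul_eq_mul_div, div_le_div_iff₀ hr' hr']
    nlinarith
  refine ⟨hfirst, ?_⟩
  have htotal : (∑ i, v i ^ 2) = Q + ∑ i ∈ (S₀ ∪ T)ᶜ, v i ^ 2 :=
    (Finset.sum_add_sum_compl (S₀ ∪ T) _).symm
  set x : ℝ := Real.sqrt ((s₀ : ℝ) / r) with hx
  have hx0 : 0 ≤ x := Real.sqrt_nonneg _
  have hx2 : x ^ 2 = (s₀ : ℝ) / r := Real.sq_sqrt (by positivity)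
  have hRHS0 : 0 ≤ (1 + 3 * x) * Real.sqrt Q := by positivity
  have hbound : (∑ i, v i ^ 2) ≤ ((1 + 3 * x) * Real.sqrt Q) ^ 2 := by
    have hsqQ : Real.sqrt Q ^ 2 = Q := Real.sq_sqrt hQ0
    have h9 : (9 * s₀ / r : ℝ) = 9 * x ^ 2 := by rw [hx2]; ring
    rw [htotal]
    nlinarith [hfirst, mul_nonneg hx0 hQ0]
  calc Real.sqrt (∑ i, v i ^ 2) ≤ Real.sqrt (((1 + 3 * x) * Real.sqrt Q) ^ 2) :=
        Real.sqrt_le_sqrt hbound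
    _ = (1 + 3 * x) * Real.sqrt Q := Real.sqrt_sq hRHS0
end
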